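/- The basic max-plus Sylvester equation A₁ ⊗ X ⊗ B₁ ⊕ A₂ ⊗ X ⊗ B₂ = C is solvable if and only if X* = (A₁♯ ⊗' C ⊗' B₁♯) ⊕' (A₂♯ ⊗' C ⊗' B₂♯) is a solution; moreover X* is then the maximum solution. -/

import Mathlib

/-- Min-plus addition on `EReal`: agrees with `+` on finite values, with `⊤` absorbing. -/
noncomputable def mpAdd (a b : EReal) : EReal := -((-a) + (-b))

/-- Max-plus matrix multiplication. -/
noncomputable def maxMul {α β γ : Type*} [Fintype β]
    (A : Matrix α β EReal) (B : Matrix β γ EReal) : Matrix α γ EReal :=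
  fun i j => ⨆ k, A i k + B k j

/-- Min-plus matrix multiplication. -/
noncomputable def minMul {α β γ : Type*} [Fintype β]
    (A : Matrix α β EReal) (B : Matrix β γ EReal) : Matrix α γ EReal :=
  fun i j => ⨅ k, mpAdd (A i k) (B k j)

/-- Max-plus matrix-vector multiplication. -/
noncomputable def maxMulVec {α β : Type*} [Fintype β]
    (A : Matrix α β EReal) (x : β → EReal) : α → EReal :=
  fun i => ⨆ j, A i j + x j

/-- Min-plus matrix-vector multiplication. -/
noncomputable def minMulVec {α β : Type*} [Fintype β]
    (A : Matrix α β EReal) (x : β → EReal) : α → EReal :=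
  fun i => ⨅ j, mpAdd (A i j) (x j)

/-- Conjugate `A♯ = -Aᵀ` (sending `-∞` to `+∞` and vice versa). -/
noncomputable def conj {α β : Type*} (A : Matrix α β EReal) : Matrix β α EReal :=
  fun j i => -(A i j)

/-- Max-plus Kronecker product: block `(i,k),(j,l)` entry is `A i j + B k l`. -/
noncomputable def kron {α β γ δ : Type*} (A : Matrix α β EReal) (B : Matrix γ δ EReal) :
    Matrix (α × γ) (β × δ) EReal :=
  fun ik jl => A ik.1 jl.1 + B ik.2 jl.2

/-- Min-plus Kronecker product. -/
noncomputable def minKron {α β γ δ : Type*} (A : Matrix α β EReal) (B : Matrix γ δ EReal) :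
    Matrix (α × γ) (β × δ) EReal :=
  fun ik jl => mpAdd (A ik.1 jl.1) (B ik.2 jl.2)

/-- Column-stacking vectorization: `vec X (j, i) = X i j`. -/
def vec {α β : Type*} (X : Matrix α β EReal) : β × α → EReal := fun p => X p.2 p.1

/-- Entries lie in `ℝ ∪ {-∞}`, i.e. no `+∞` entries. -/
def RMaxEntries {α β : Type*} (A : Matrix α β EReal) : Prop := ∀ i j, A i j ≠ ⊤

/-- Doubly ℝ-astic: entries in `ℝ ∪ {-∞}`, with a finite entry in each row and column. -/
def DoublyRAstic {α β : Type*} (A : Matrix α β EReal) : Prop :=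
  (∀ i j, A i j ≠ ⊤) ∧ (∀ i, ∃ j, A i j ≠ ⊥) ∧ (∀ j, ∃ i, A i j ≠ ⊥)

/-- All entries of the matrix are finite reals. -/
def FiniteEntries {α β : Type*} (C : Matrix α β EReal) : Prop :=
  ∀ i j, ∃ r : ℝ, C i j = (r : EReal)

/-- All entries of the vector are finite reals. -/
def FiniteVec {α : Type*} (b : α → EReal) : Prop := ∀ i, ∃ r : ℝ, b i = (r : EReal)

/-!
For fixed `a`, the map `x ↦ a + x` on `EReal` has the upper adjoint `c ↦ mpAdd (-a) c`; this
is why min-plus addition must let `⊤` absorb. Taking suprema and infima entrywise, `X ↦ A ⊗ X ⊗ B`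
is residuated with residual `C ↦ A♯ ⊗' C ⊗' B♯`, and the max of two residuated maps is residuated
with the min of their residuals as residual. For any residuated map `f` with residual `g`, the
equation `f X = C` is solvable iff `f (g C) = C`, and every solution lies below `g C`. Finiteness
of `C` and a finite entry in every column of `A₁` and row of `B₁` keep `X*` free of `+∞`.
-/

theorem mpAdd_comm (a b : EReal) : mpAdd a b = mpAdd b a := by
  rw [mpAdd, mpAdd, add_comm]

theorem mpAdd_ne_top {a b : EReal} (ha : a ≠ ⊤) (hb : b ≠ ⊤) : mpAdd a b ≠ ⊤ := by
  rw [mpAdd, Ne, EReal.neg_eq_top_iff, ← Ne, EReal.add_ne_bot_iff, Ne, Ne,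
    EReal.neg_eq_bot_iff, EReal.neg_eq_bot_iff]
  exact ⟨ha, hb⟩

theorem galoisConnection_const_add_mpAdd (a : EReal) :
    GaloisConnection (a + ·) (mpAdd (-a)) := by
  intro x c
  rw [mpAdd, neg_neg]
  induction a using EReal.rec <;> induction x using EReal.rec <;> induction c using EReal.rec <;>
    simp [← EReal.coe_add, ← EReal.coe_neg, add_comm]

theorem galoisConnection_add_const_mpAdd (b : EReal) :
    GaloisConnection (· + b) (mpAdd · (-b)) := by
  intro x c
  simpa only [add_comm x, mpAdd_comm c] using galoisConnection_const_add_mpAdd b x c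

namespace EReal

theorem add_iSup {ι : Sort*} (a : EReal) (f : ι → EReal) : a + ⨆ i, f i = ⨆ i, a + f i :=
  (galoisConnection_const_add_mpAdd a).l_iSup

theorem iSup_add {ι : Sort*} (f : ι → EReal) (b : EReal) : (⨆ i, f i) + b = ⨆ i, f i + b :=
  (galoisConnection_add_const_mpAdd b).l_iSup

end EReal

theorem GaloisConnection.sup_inf {α β : Type*} [SemilatticeInf α] [SemilatticeSup β]
    {l₁ l₂ : α → β} {u₁ u₂ : β → α} (gc₁ : GaloisConnection l₁ u₁)
    (gc₂ : GaloisConnection l₂ u₂) :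
    GaloisConnection (fun a => l₁ a ⊔ l₂ a) (fun b => u₁ b ⊓ u₂ b) := fun a b => by
  rw [sup_le_iff, le_inf_iff, gc₁, gc₂]

section MaxPlusMatrix

variable {l m n o : Type*}

noncomputable instance : CompleteLattice (Matrix m n EReal) :=
  inferInstanceAs (CompleteLattice (m → n → EReal))

theorem maxMul_assoc [Fintype m] [Fintype n] (A : Matrix l m EReal) (B : Matrix m n EReal)
    (C : Matrix n o EReal) : maxMul (maxMul A B) C = maxMul A (maxMul B C) := by
  funext i j
  simp only [maxMul, EReal.iSup_add, EReal.add_iSup, add_assoc]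
  exact iSup_comm

theorem galoisConnection_maxMul_left [Fintype l] [Fintype m] (A : Matrix l m EReal) :
    GaloisConnection (maxMul A : Matrix m n EReal → Matrix l n EReal) (minMul (conj A)) := by
  intro Y C
  show (∀ i j, maxMul A Y i j ≤ C i j) ↔ ∀ k j, Y k j ≤ minMul (conj A) C k j
  simp only [maxMul, minMul, conj, iSup_le_iff, le_iInf_iff,
    (galoisConnection_const_add_mpAdd _).le_iff_le]
  exact ⟨fun h k j i => h i j k, fun h i j k => h k j i⟩

theorem galoisConnection_maxMul_right [Fintype m] [Fintype n] (B : Matrix m n EReal) :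
    GaloisConnection (maxMul · B : Matrix l m EReal → Matrix l n EReal) (minMul · (conj B)) := by
  intro Y C
  show (∀ i j, maxMul Y B i j ≤ C i j) ↔ ∀ i k, Y i k ≤ minMul C (conj B) i k
  simp only [maxMul, minMul, conj, iSup_le_iff, le_iInf_iff,
    (galoisConnection_add_const_mpAdd _).le_iff_le]
  exact ⟨fun h i k j => h i j k, fun h i j k => h i k j⟩

theorem galoisConnection_maxMul_maxMul [Fintype l] [Fintype m] [Fintype n] [Fintype o]
    (A : Matrix l m EReal) (B : Matrix n o EReal) :
    GaloisConnection (fun X : Matrix m n EReal => maxMul A (maxMul X B))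
      (fun C => minMul (conj A) (minMul C (conj B))) := fun X C => by
  beta_reduce
  rw [← maxMul_assoc]
  exact (galoisConnection_maxMul_left A).compose (galoisConnection_maxMul_right B) X C

theorem minMul_ne_top [Fintype m] {A : Matrix l m EReal} {B : Matrix m n EReal} {i : l} {j : n}
    (k : m) (hA : A i k ≠ ⊤) (hB : B k j ≠ ⊤) : minMul A B i j ≠ ⊤ :=
  ne_top_of_le_ne_top (mpAdd_ne_top hA hB) (iInf_le _ k)

theorem rmaxEntries_minMul_conj_minMul_conj [Fintype l] [Fintype o] {A : Matrix l m EReal}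
    {B : Matrix n o EReal} {C : Matrix l o EReal} (hA : ∀ k, ∃ i, A i k ≠ ⊥)
    (hB : ∀ k, ∃ j, B k j ≠ ⊥) (hC : ∀ i j, C i j ≠ ⊤) :
    RMaxEntries (minMul (conj A) (minMul C (conj B))) := by
  intro k k'
  obtain ⟨i, hi⟩ := hA k
  obtain ⟨j, hj⟩ := hB k'
  refine minMul_ne_top i ?_ (minMul_ne_top j (hC i j) ?_) <;>
    simpa only [conj, Ne, EReal.neg_eq_top_iff]

end MaxPlusMatrix

theorem stmt10_general {m n : ℕ} (A₁ A₂ : Matrix (Fin m) (Fin m) EReal)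
    (B₁ B₂ : Matrix (Fin n) (Fin n) EReal) (C : Matrix (Fin m) (Fin n) EReal)
    (hA₁ : DoublyRAstic A₁)
    (hB₁ : DoublyRAstic B₁) (hC : FiniteEntries C) :
    ((∃ X : Matrix (Fin m) (Fin n) EReal, RMaxEntries X ∧
        (fun i j => maxMul A₁ (maxMul X B₁) i j ⊔ maxMul A₂ (maxMul X B₂) i j) = C) ↔
      (fun i j =>
          maxMul A₁ (maxMul (fun i' j' =>
            minMul (conj A₁) (minMul C (conj B₁)) i' j' ⊓
            minMul (conj A₂) (minMul C (conj B₂)) i' j') B₁) i j ⊔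
          maxMul A₂ (maxMul (fun i' j' =>
            minMul (conj A₁) (minMul C (conj B₁)) i' j' ⊓
            minMul (conj A₂) (minMul C (conj B₂)) i' j') B₂) i j) = C) ∧
    (∀ X : Matrix (Fin m) (Fin n) EReal, RMaxEntries X →
      (fun i j => maxMul A₁ (maxMul X B₁) i j ⊔ maxMul A₂ (maxMul X B₂) i j) = C →
      ∀ i j, X i j ≤ minMul (conj A₁) (minMul C (conj B₁)) i j ⊓
        minMul (conj A₂) (minMul C (conj B₂)) i j) := by
  have gc := (galoisConnection_maxMul_maxMul A₁ B₁).sup_inf (galoisConnection_maxMul_maxMul A₂ B₂)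
  have hC_ne_top : ∀ i j, C i j ≠ ⊤ := fun i j => by
    obtain ⟨r, hr⟩ := hC i j
    exact hr ▸ EReal.coe_ne_top r
  have hX_rmax : RMaxEntries fun i j =>
      minMul (conj A₁) (minMul C (conj B₁)) i j ⊓ minMul (conj A₂) (minMul C (conj B₂)) i j :=
    fun k l => ne_top_of_le_ne_top
      (rmaxEntries_minMul_conj_minMul_conj hA₁.2.2 hB₁.2.1 hC_ne_top k l) inf_le_left
  refine ⟨⟨fun ⟨X, _, hX⟩ => ((gc.exists_eq_l C).1 ⟨X, hX.symm⟩).symm,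
    fun h => ⟨_, hX_rmax, h⟩⟩, fun X _ hX => gc.le_u hX.le⟩

theorem stmt10 {m n : ℕ} (A₁ A₂ : Matrix (Fin m) (Fin m) EReal)
    (B₁ B₂ : Matrix (Fin n) (Fin n) EReal) (C : Matrix (Fin m) (Fin n) EReal)
    (hA₁ : DoublyRAstic A₁) (hA₂ : DoublyRAstic A₂)
    (hB₁ : DoublyRAstic B₁) (hB₂ : DoublyRAstic B₂) (hC : FiniteEntries C) :
    ((∃ X : Matrix (Fin m) (Fin n) EReal, RMaxEntries X ∧
        (fun i j => maxMul A₁ (maxMul X B₁) i j ⊔ maxMul A₂ (maxMul X B₂) i j) = C) ↔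
      (fun i j =>
          maxMul A₁ (maxMul (fun i' j' =>
            minMul (conj A₁) (minMul C (conj B₁)) i' j' ⊓
            minMul (conj A₂) (minMul C (conj B₂)) i' j') B₁) i j ⊔
          maxMul A₂ (maxMul (fun i' j' =>
            minMul (conj A₁) (minMul C (conj B₁)) i' j' ⊓
            minMul (conj A₂) (minMul C (conj B₂)) i' j') B₂) i j) = C) ∧
    (∀ X : Matrix (Fin m) (Fin n) EReal, RMaxEntries X →
      (fun i j => maxMul A₁ (maxMul X B₁) i j ⊔ maxMul A₂ (maxMul X B₂) i j) = C →
      ∀ i j, X i j ≤ minMul (conj A₁) (minMul C (conj B₁)) i j ⊓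
        minMul (conj A₂) (minMul C (conj B₂)) i j) :=
  stmt10_general A₁ A₂ B₁ B₂ C hA₁ hB₁ hC
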